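/- (Lower bound on ‖Av‖ for a fixed direction) Let N_n be an n×n random matrix with independent entries each having κ-controlled second moment for a fixed κ ≥ 1. Then there exist constants c, c' > 0 depending only on κ such that for any fixed unit vector v ∈ ℂ^n and any deterministic n×n matrix M, P(‖(M+N_n)v‖ ≤ c n^{1/2}) ≤ exp(−c' n). -/

import Mathlib

open MeasureTheory ProbabilityTheory Complex Matrix

/-- A complex random variable `ξ` has `κ`-controlled second moment if `E|ξ|² ≤ κ`
and `E[Re(zξ − w)² · 1_{|ξ| ≤ κ}] ≥ Re(z)²/κ` for all complex `z, w`. -/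
def Controlled {Ω : Type*} [MeasureSpace Ω] (κ : ℝ) (ξ : Ω → ℂ) : Prop :=
  ((∫ ω, ‖ξ ω‖ ^ 2) ≤ κ) ∧
  ∀ z w : ℂ, (1 / κ) * z.re ^ 2 ≤ ∫ ω in {ω | ‖ξ ω‖ ≤ κ}, ((z * ξ ω - w).re) ^ 2

/-!
Rotate by a unimodular `u` so that `z = u • v` has `∑ (Re zⱼ)² ≥ 1/2`, and look at the real parts
`Yᵢ = Re (u ((M + N) v)ᵢ)` of the rows. On `{|ξ| ≤ κ}` the function `1 - cos` dominates a
quadratic, so the controlled second moment makes every entry contribute a factor at most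
`1 - c (Re zⱼ)²` to the characteristic function of `Yᵢ / κ`, and by independence
`|E e^{i Yᵢ/κ}| ≤ e^{-1/(90κ³)} = 1 - δ`. As `1 - cos t ≤ 2 min (t², 1)`, the truncated squares
`mᵢ = min (Yᵢ²/κ², 1)` satisfy `E e^{-mᵢ} ≤ e^{-δ/4}`; the rows are independent, so Chernoff's
bound gives `P (∑ mᵢ ≤ δn/8) ≤ e^{-δn/8}`. Finally `‖(M + N) v‖ ≤ κ √(δ/8) √n` forces
`∑ mᵢ ≤ ‖(M + N) v‖² / κ² ≤ δn/8`.
-/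

lemma one_sub_cos_le_two_mul_min_sq (t : ℝ) : 1 - Real.cos t ≤ 2 * min (t ^ 2) 1 := by
  rcases le_total (t ^ 2) 1 with h | h
  · rw [min_eq_left h]
    nlinarith [Real.one_sub_sq_div_two_le_cos (x := t), sq_nonneg t]
  · rw [min_eq_right h]
    linarith [Real.neg_one_le_cos t]

lemma min_sq_div_five_le_one_sub_cos {t : ℝ} (ht : |t| ≤ Real.pi + 1) :
    min (t ^ 2) 1 / 5 ≤ 1 - Real.cos t := by
  rcases le_or_gt |t| Real.pi with h | h
  · have hcos := Real.cos_le_one_sub_mul_cos_sq h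
    have hπ : Real.pi ^ 2 < 10 := by nlinarith [Real.pi_lt_d2, Real.pi_pos]
    have : t ^ 2 / 5 ≤ 2 / Real.pi ^ 2 * t ^ 2 := by
      rw [div_mul_eq_mul_div, le_div_iff₀ (by positivity)]
      nlinarith [sq_nonneg t]
    linarith [min_le_left (t ^ 2) 1]
  · have : Real.cos t ≤ 0 := by
      rw [← Real.cos_abs]
      apply Real.cos_nonpos_of_pi_div_two_le_of_le <;> linarith [Real.pi_gt_three]
    linarith [min_le_right (t ^ 2) 1]

lemma sq_sub_max_min_le {s w : ℝ} (hs : |s| ≤ 1) :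
    (s - max (-2) (min w 2)) ^ 2 ≤ 9 * min ((s - w) ^ 2) 1 := by
  rw [abs_le] at hs
  rcases le_total w (-2) with hw | hw
  · rw [min_eq_left (by linarith), max_eq_left hw, min_eq_right (by nlinarith)]
    nlinarith
  rcases le_total w 2 with hw' | hw'
  · rw [min_eq_left hw', max_eq_right hw]
    rcases le_total ((s - w) ^ 2) 1 with h | h
    · rw [min_eq_left h]; nlinarith [sq_nonneg (s - w)]
    · rw [min_eq_right h]; nlinarith
  · rw [min_eq_right hw', max_eq_right (by norm_num), min_eq_right (by nlinarith)]
    nlinarith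

lemma exists_sq_sub_div_le_one_sub_cos (β : ℝ) :
    ∃ w, ∀ s, |s| ≤ 1 → (s - w) ^ 2 / 45 ≤ 1 - Real.cos (s - β) := by
  set w₀ := toIocMod Real.two_pi_pos (-Real.pi) β
  have hw₀ : w₀ ∈ Set.Ioc (-Real.pi) (-Real.pi + 2 * Real.pi) := toIocMod_mem_Ioc _ _ _
  refine ⟨max (-2) (min w₀ 2), fun s hs ↦ ?_⟩
  have hcos : Real.cos (s - β) = Real.cos (s - w₀) := by
    have hβ := self_sub_toIocMod_eq_mul Real.two_pi_pos (-Real.pi) β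
    rw [← Real.cos_sub_int_mul_two_pi (s - w₀) (toIocDiv Real.two_pi_pos (-Real.pi) β), ← hβ,
      sub_sub_sub_cancel_right]
  have hsw : |s - w₀| ≤ Real.pi + 1 := by
    rw [abs_le] at hs ⊢; constructor <;> linarith [hw₀.1, hw₀.2]
  rw [hcos]
  linarith [sq_sub_max_min_le (w := w₀) hs, min_sq_div_five_le_one_sub_cos hsw]

lemma Real.exp_neg_le_one_sub_half {x : ℝ} (h₀ : 0 ≤ x) (h₁ : x ≤ 1) :
    Real.exp (-x) ≤ 1 - x / 2 := by
  rw [Real.exp_neg, inv_le_comm₀ (Real.exp_pos x) (by linarith)]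
  calc (1 - x / 2)⁻¹ ≤ 1 + x := by
        rw [inv_le_iff_one_le_mul₀ (by linarith)]; nlinarith
    _ ≤ Real.exp x := by linarith [Real.add_one_le_exp x]

section ExpOfRealMulI

variable {Ω : Type*} {mΩ : MeasurableSpace Ω} {μ : Measure Ω} {f : Ω → ℝ}

lemma integrable_exp_ofReal_mul_I [IsFiniteMeasure μ] (hf : Measurable f) :
    Integrable (fun ω ↦ exp (f ω * I)) μ :=
  .of_bound (by fun_prop) 1 (.of_forall fun ω ↦ (norm_exp_ofReal_mul_I _).le)

lemma re_integral_exp_ofReal_mul_I [IsFiniteMeasure μ] (hf : Measurable f) :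
    (∫ ω, exp (f ω * I) ∂μ).re = ∫ ω, Real.cos (f ω) ∂μ := by
  rw [← RCLike.re_to_complex, ← integral_re (integrable_exp_ofReal_mul_I hf)]
  simp [exp_ofReal_mul_I_re]

lemma norm_integral_exp_ofReal_mul_I [IsFiniteMeasure μ] (hf : Measurable f) :
    ‖∫ ω, exp (f ω * I) ∂μ‖ =
      ∫ ω, Real.cos (f ω - arg (∫ ω, exp (f ω * I) ∂μ)) ∂μ := by
  set φ := ∫ ω, exp (f ω * I) ∂μ
  have hrot : φ * exp (-(arg φ * I)) = ‖φ‖ := by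
    nth_rw 1 [← norm_mul_exp_arg_mul_I φ]
    rw [mul_assoc, ← exp_add, add_neg_cancel, exp_zero, mul_one]
  have hint : φ * exp (-(arg φ * I)) = ∫ ω, exp (((f ω - arg φ : ℝ) : ℂ) * I) ∂μ := by
    rw [← integral_mul_const]
    congr 1 with ω
    rw [← exp_add]
    push_cast
    ring_nf
  rw [← re_integral_exp_ofReal_mul_I (by fun_prop), ← hint, hrot, ofReal_re]

lemma integral_exp_neg_min_sq_le [IsProbabilityMeasure μ] (hf : Measurable f) :
    ∫ ω, Real.exp (-min (f ω ^ 2) 1) ∂μ ≤ Real.exp (-((1 - ‖∫ ω, exp (f ω * I) ∂μ‖) / 4)) := by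
  have hpt (ω : Ω) : Real.exp (-min (f ω ^ 2) 1) ≤ 3 / 4 + Real.cos (f ω) / 4 := by
    have := Real.exp_neg_le_one_sub_half (le_min (sq_nonneg (f ω)) zero_le_one)
      (min_le_right _ 1)
    linarith [one_sub_cos_le_two_mul_min_sq (f ω)]
  have hcos : Integrable (fun ω ↦ Real.cos (f ω)) μ :=
    .of_bound (by fun_prop) 1 (.of_forall fun ω ↦ by simpa using Real.abs_cos_le_one (f ω))
  calc ∫ ω, Real.exp (-min (f ω ^ 2) 1) ∂μ ≤ ∫ ω, (3 / 4 + Real.cos (f ω) / 4) ∂μ :=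
        integral_mono (.of_bound (by fun_prop) 1 (.of_forall fun ω ↦ by
          simpa [abs_of_pos (Real.exp_pos _)] using le_min (sq_nonneg (f ω)) zero_le_one))
          ((integrable_const _).add (hcos.div_const 4)) hpt
    _ = 3 / 4 + (∫ ω, exp (f ω * I) ∂μ).re / 4 := by
        rw [integral_add (integrable_const _) (hcos.div_const 4), re_integral_exp_ofReal_mul_I hf,
          ← integral_div]
        simp
    _ ≤ 1 - (1 - ‖∫ ω, exp (f ω * I) ∂μ‖) / 4 := by linarith [re_le_norm (∫ ω, exp (f ω * I) ∂μ)]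
    _ ≤ _ := by linarith [Real.add_one_le_exp (-((1 - ‖∫ ω, exp (f ω * I) ∂μ‖) / 4))]

end ExpOfRealMulI

lemma iIndepFun_curry {Ω ι κ 𝓧 : Type*} {mΩ : MeasurableSpace Ω} {P : Measure Ω}
    [MeasurableSpace 𝓧] {X : ι → κ → Ω → 𝓧} (mX : ∀ i j, Measurable (X i j))
    (h : iIndepFun (fun p : ι × κ ↦ X p.1 p.2) P) :
    iIndepFun (fun i ω j ↦ X i j ω) P := by
  have := h.isProbabilityMeasure
  have hrow (i : ι) : iIndepFun (X i) P :=
    h.precomp (g := fun j ↦ (i, j)) fun _ _ hj ↦ (Prod.mk.inj hj).2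
  rw [iIndepFun_iff_map_fun_eq_infinitePi_map (by fun_prop)] at h ⊢
  have _ : ∀ i j, IsProbabilityMeasure (P.map (X i j)) := fun i j ↦
    Measure.isProbabilityMeasure_map (mX i j).aemeasurable
  have hcomp : (fun ω i j ↦ X i j ω) = MeasurableEquiv.curry ι κ 𝓧 ∘ fun ω p ↦ X p.1 p.2 ω := rfl
  rw [hcomp, ← Measure.map_map (by fun_prop) (by fun_prop), h,
    Measure.infinitePi_map_curry fun i j ↦ P.map (X i j)]
  congr! 2 with i
  exact ((hrow i).map_fun_eq_infinitePi_map (mX i)).symm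

lemma iIndepFun.measureReal_sum_le_le_exp {Ω ι : Type*} [Fintype ι] {mΩ : MeasurableSpace Ω}
    {μ : Measure Ω} {X : ι → Ω → ℝ} (hind : iIndepFun X μ) (hX : ∀ i, Measurable (X i))
    (hX₀ : ∀ i ω, 0 ≤ X i ω) {r : ℝ} (hr : ∀ i, ∫ ω, Real.exp (-X i ω) ∂μ ≤ Real.exp (-r))
    (ε : ℝ) :
    μ.real {ω | ∑ i, X i ω ≤ ε} ≤ Real.exp (ε - Fintype.card ι * r) := by
  have := hind.isProbabilityMeasure
  have hchernoff := measure_le_le_exp_mul_mgf (X := ∑ i, X i) (μ := μ) ε (t := -1) (by norm_num)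
    (.of_bound (by fun_prop) 1 (.of_forall fun ω ↦ by
      simpa [abs_of_pos (Real.exp_pos _)] using Finset.sum_nonneg fun i _ ↦ hX₀ i ω))
  rw [hind.mgf_sum hX] at hchernoff
  simp only [Finset.sum_apply, neg_neg, one_mul] at hchernoff
  calc _ ≤ Real.exp ε * ∏ _i : ι, Real.exp (-r) := by
        refine hchernoff.trans ?_
        gcongr with i
        · exact fun i _ ↦ mgf_nonneg
        · simpa [mgf] using hr i
    _ = Real.exp (ε - Fintype.card ι * r) := by
        rw [Finset.prod_const, Finset.card_univ, ← Real.exp_nat_mul, ← Real.exp_add]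
        ring_nf

section Controlled

variable {Ω : Type*} [MeasureSpace Ω] [IsProbabilityMeasure (ℙ : Measure Ω)] {κ : ℝ}

lemma Controlled.norm_integral_exp_le (hκ : 0 < κ) {ξ : Ω → ℂ} (hξ : Measurable ξ)
    (hc : Controlled κ ξ) {z : ℂ} (hz : ‖z‖ ≤ 1) :
    ‖∫ ω, exp (((κ⁻¹ * (z * ξ ω).re : ℝ) : ℂ) * I)‖ ≤ 1 - z.re ^ 2 / (45 * κ ^ 3) := by
  set X : Ω → ℝ := fun ω ↦ κ⁻¹ * (z * ξ ω).re
  have hX : Measurable X := by fun_prop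
  have hnorm := norm_integral_exp_ofReal_mul_I (μ := ℙ) hX
  set β := arg (∫ ω, exp (X ω * I))
  obtain ⟨w, hcos⟩ := exists_sq_sub_div_le_one_sub_cos β
  have hctrl := hc.2 (κ⁻¹ * z) w
  have hre (ω : Ω) : ((κ⁻¹ * z : ℂ) * ξ ω - w).re = X ω - w := by
    simp only [X, sub_re, ofReal_re, mul_assoc, re_ofReal_mul]
  simp only [hre, re_ofReal_mul] at hctrl
  set B := {ω | ‖ξ ω‖ ≤ κ}
  have hB : MeasurableSet B := measurableSet_le hξ.norm measurable_const
  have hXB : ∀ ω ∈ B, |X ω| ≤ 1 := fun ω hω ↦ by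
    rw [abs_mul, abs_inv, abs_of_pos hκ, inv_mul_le_one₀ hκ]
    calc |(z * ξ ω).re| ≤ ‖z‖ * ‖ξ ω‖ := (abs_re_le_norm _).trans (norm_mul _ _).le
      _ ≤ 1 * κ := mul_le_mul hz hω (norm_nonneg _) zero_le_one
      _ = κ := one_mul κ
  have hcosint : Integrable (fun ω ↦ Real.cos (X ω - β)) :=
    .of_bound (by fun_prop) 1 (.of_forall fun ω ↦ by simpa using Real.abs_cos_le_one _)
  have hint := (integrable_const 1).sub hcosint
  calc ‖∫ ω, exp (X ω * I)‖ = 1 - ∫ ω, (1 - Real.cos (X ω - β)) := by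
        rw [hnorm, integral_sub (integrable_const 1) hcosint]
        simp
    _ ≤ 1 - ∫ ω in B, (X ω - w) ^ 2 / 45 := by
        gcongr
        calc ∫ ω in B, (X ω - w) ^ 2 / 45 ≤ ∫ ω in B, (1 - Real.cos (X ω - β)) :=
              integral_mono_of_nonneg (.of_forall fun ω ↦ by positivity) hint.integrableOn
                ((ae_restrict_mem hB).mono fun ω hω ↦ hcos _ (hXB ω hω))
          _ ≤ ∫ ω, (1 - Real.cos (X ω - β)) :=
              setIntegral_le_integral hint (.of_forall fun ω ↦ by
                simp [Real.cos_le_one])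
    _ ≤ 1 - z.re ^ 2 / (45 * κ ^ 3) := by
        have h45 : z.re ^ 2 / (45 * κ ^ 3) = 1 / κ * (κ⁻¹ * z.re) ^ 2 / 45 := by field_simp
        rw [integral_div, h45]
        linarith [div_le_div_of_nonneg_right hctrl (by norm_num : (0 : ℝ) ≤ 45)]

lemma norm_integral_exp_sum_le {ι : Type*} [Fintype ι] (hκ : 0 < κ) {ξ : ι → Ω → ℂ}
    (hξ : ∀ j, Measurable (ξ j)) (hind : iIndepFun ξ ℙ) (hc : ∀ j, Controlled κ (ξ j))
    {z : ι → ℂ} (hz : ∀ j, ‖z j‖ ≤ 1) (a : ℝ) :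
    ‖∫ ω, exp (((κ⁻¹ * (a + ∑ j, (z j * ξ j ω).re) : ℝ) : ℂ) * I)‖ ≤
      Real.exp (-(∑ j, (z j).re ^ 2) / (45 * κ ^ 3)) := by
  have hfactor (ω : Ω) : exp (((κ⁻¹ * (a + ∑ j, (z j * ξ j ω).re) : ℝ) : ℂ) * I) =
      exp ((κ⁻¹ * a : ℝ) * I) * ∏ j, exp (((κ⁻¹ * (z j * ξ j ω).re : ℝ) : ℂ) * I) := by
    rw [← exp_sum, ← exp_add]
    push_cast
    rw [mul_add, add_mul, Finset.mul_sum, Finset.sum_mul]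
  simp_rw [hfactor, integral_const_mul]
  rw [hind.integral_fun_prod_comp (f := fun j c ↦ exp (((κ⁻¹ * (z j * c).re : ℝ) : ℂ) * I))
      (fun j ↦ (hξ j).aemeasurable) (fun j ↦ by fun_prop),
    norm_mul, norm_exp_ofReal_mul_I, one_mul, norm_prod, neg_div, Finset.sum_div,
    ← Finset.sum_neg_distrib, Real.exp_sum]
  gcongr with j
  calc _ ≤ 1 - (z j).re ^ 2 / (45 * κ ^ 3) := (hc j).norm_integral_exp_le hκ (hξ j) (hz j)
    _ ≤ _ := by linarith [Real.add_one_le_exp (-((z j).re ^ 2 / (45 * κ ^ 3)))]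

lemma integral_exp_neg_min_sq_sum_le {ι : Type*} [Fintype ι] (hκ : 0 < κ) {ξ : ι → Ω → ℂ}
    (hξ : ∀ j, Measurable (ξ j)) (hind : iIndepFun ξ ℙ) (hc : ∀ j, Controlled κ (ξ j))
    {z : ι → ℂ} (hz : ∀ j, ‖z j‖ ≤ 1) (hz₂ : 1 / 2 ≤ ∑ j, (z j).re ^ 2) (a : ℝ) :
    ∫ ω, Real.exp (-min ((κ⁻¹ * (a + ∑ j, (z j * ξ j ω).re)) ^ 2) 1) ≤
      Real.exp (-((1 - Real.exp (-(1 / (90 * κ ^ 3)))) / 4)) := by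
  refine (integral_exp_neg_min_sq_le (by fun_prop)).trans ?_
  gcongr
  refine (norm_integral_exp_sum_le hκ hξ hind hc hz a).trans (Real.exp_le_exp.2 ?_)
  rw [neg_div, neg_le_neg_iff, div_le_div_iff₀ (by positivity) (by positivity)]
  nlinarith [pow_pos hκ 3]

end Controlled

lemma exists_norm_eq_one_half_norm_sq_le_sum_re_sq {ι : Type*} [Fintype ι]
    (v : EuclideanSpace ℂ ι) : ∃ u : ℂ, ‖u‖ = 1 ∧ ‖v‖ ^ 2 / 2 ≤ ∑ j, (u * v j).re ^ 2 := by
  have hsplit : ‖v‖ ^ 2 = ∑ j, (v j).re ^ 2 + ∑ j, (v j).im ^ 2 := by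
    simp_rw [EuclideanSpace.norm_sq_eq, ← Finset.sum_add_distrib, Complex.sq_norm, normSq_apply]
    ring_nf
  rcases le_total (‖v‖ ^ 2 / 2) (∑ j, (v j).re ^ 2) with h | h
  · exact ⟨1, by simp, by simpa using h⟩
  · exact ⟨-I, by simp, by simp only [neg_mul, neg_re, I_mul_re, neg_neg]; linarith⟩

lemma sum_min_sq_re_mul_le {ι : Type*} [Fintype ι] {x : EuclideanSpace ℂ ι} {u : ℂ}
    (hu : ‖u‖ = 1) {κ r : ℝ} (hκ : 0 < κ) (hx : ‖x‖ ≤ κ * r) :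
    ∑ i, min ((κ⁻¹ * (u * x i).re) ^ 2) 1 ≤ r ^ 2 := by
  calc ∑ i, min ((κ⁻¹ * (u * x i).re) ^ 2) 1 ≤ ∑ i, (κ⁻¹ * ‖x i‖) ^ 2 := by
        gcongr with i
        refine (min_le_left _ _).trans ?_
        rw [mul_pow, mul_pow, ← sq_abs (u * x i).re]
        gcongr
        calc |(u * x i).re| ≤ ‖u * x i‖ := abs_re_le_norm _
          _ = ‖x i‖ := by rw [norm_mul, hu, one_mul]
    _ = (κ⁻¹ * ‖x‖) ^ 2 := by simp_rw [mul_pow, ← Finset.mul_sum, EuclideanSpace.norm_sq_eq]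
    _ ≤ r ^ 2 := by
        gcongr
        rwa [inv_mul_le_iff₀ hκ]

lemma re_mul_mulVec_add {ι : Type*} [Fintype ι] (u : ℂ) (A B : Matrix ι ι ℂ) (v : ι → ℂ)
    (i : ι) : (u * ((A + B) *ᵥ v) i).re = (u * (A *ᵥ v) i).re + ∑ j, (u * v j * B i j).re := by
  rw [add_mulVec, Pi.add_apply, mul_add, add_re]
  congr 1
  simp only [mulVec, dotProduct, Finset.mul_sum, re_sum]
  congr! 2 with j
  ring_nf

/-- For a random matrix `N_n` with independent `κ`-controlled entries, any fixed
unit vector `v` and any deterministic matrix `M`: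
`P(‖(M+N_n)v‖ ≤ c√n) ≤ exp(−c'n)`, with `c, c' > 0` depending only on `κ`. -/
theorem stmt12 (κ : ℝ) (hκ : 1 ≤ κ) :
    ∃ c > (0 : ℝ), ∃ c' > (0 : ℝ),
      ∀ (Ω : Type) [MeasureSpace Ω], IsProbabilityMeasure (ℙ : Measure Ω) →
      ∀ (n : ℕ) (N : Ω → Matrix (Fin n) (Fin n) ℂ),
        (∀ i j, Measurable fun ω => N ω i j) →
        iIndepFun
          (fun p : Fin n × Fin n => fun ω => N ω p.1 p.2) ℙ →
        (∀ i j, Controlled κ (fun ω => N ω i j)) →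
        ∀ (M : Matrix (Fin n) (Fin n) ℂ) (v : EuclideanSpace ℂ (Fin n)), ‖v‖ = 1 →
          (ℙ {ω | ‖Matrix.toEuclideanCLM (𝕜 := ℂ) (M + N ω) v‖
              ≤ c * (n : ℝ) ^ ((1 : ℝ) / 2)}).toReal ≤ Real.exp (-c' * n) := by
  have hκ₀ : 0 < κ := one_pos.trans_le hκ
  set δ := 1 - Real.exp (-(1 / (90 * κ ^ 3)))
  have hδ : 0 < δ := by
    simp only [δ, sub_pos, Real.exp_lt_one_iff, neg_lt_zero]; positivity
  refine ⟨κ * √(δ / 8), by positivity, δ / 8, by positivity, ?_⟩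
  intro Ω _ _ n N hN hind hc M v hv
  obtain ⟨u, hu, huv⟩ := exists_norm_eq_one_half_norm_sq_le_sum_re_sq v
  rw [hv, one_pow] at huv
  set G : Fin n → (Fin n → ℂ) → ℝ := fun i r ↦
    min ((κ⁻¹ * ((u * (M *ᵥ v) i).re + ∑ j, (u * v j * r j).re)) ^ 2) 1
  set m : Fin n → Ω → ℝ := fun i ω ↦ G i (N ω i)
  have hm_indep : iIndepFun m ℙ := (iIndepFun_curry hN hind).comp G (fun i ↦ by fun_prop)
  have hm_row (i : Fin n) : ∫ ω, Real.exp (-m i ω) ≤ Real.exp (-(δ / 4)) :=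
    integral_exp_neg_min_sq_sum_le hκ₀ (hN i) (hind.precomp fun _ _ hj ↦ (Prod.mk.inj hj).2)
      (hc i) (fun j ↦ by simpa [hu] using PiLp.norm_apply_le v j |>.trans hv.le) huv _
  have hevent : {ω | ‖toEuclideanCLM (𝕜 := ℂ) (M + N ω) v‖ ≤ κ * √(δ / 8) * (n : ℝ) ^ ((1 : ℝ) / 2)}
      ⊆ {ω | ∑ i, m i ω ≤ δ / 8 * n} := fun ω hω ↦ by
    have hrow (i : Fin n) :
        m i ω = min ((κ⁻¹ * (u * toEuclideanCLM (𝕜 := ℂ) (M + N ω) v i).re) ^ 2) 1 := by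
      simp only [m, G, ← re_mul_mulVec_add]
      rfl
    rw [Set.mem_ofPred_eq, Finset.sum_congr rfl fun i _ ↦ hrow i]
    convert sum_min_sq_re_mul_le hu hκ₀ (hω.trans_eq (mul_assoc _ _ _))
    rw [mul_pow, ← Real.sqrt_eq_rpow, Real.sq_sqrt (by positivity), Real.sq_sqrt (by positivity)]
  calc (ℙ _).toReal ≤ (ℙ : Measure Ω).real {ω | ∑ i, m i ω ≤ δ / 8 * n} :=
        measureReal_mono hevent (measure_ne_top _ _)
    _ ≤ Real.exp (δ / 8 * n - n * (δ / 4)) := by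
        simpa using iIndepFun.measureReal_sum_le_le_exp hm_indep (fun i ↦ by fun_prop)
          (fun i ω ↦ le_min (sq_nonneg _) zero_le_one) hm_row _
    _ = Real.exp (-(δ / 8) * n) := by ring_nf
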